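/- Let a > 0 and consider events in (d+1)-dimensional Minkowski spacetime (d ≥ 2): (x_A,t_A) = ((-a,0,...,0), 0), (x_C,t_C) = ((a,0,...,0), 0), and (x_B,t_B) = ((x_B, y_B, 0,...,0), t_B) with -a ≤ x_B ≤ a. Then L_>(x_A,t_A) ∩ L_>(x_C,t_C) ⊆ L_>(x_B,t_B) if and only if t_B ≤ -|y_B|. -/

import Mathlib

/-!
Sufficiency: `x_B e₀` lies on the segment between `±a e₀` and closed balls are convex, so the two
cones at time `0` are contained in the cone at `(x_B e₀, 0)`; this cone lies inside the cone at
`(x_B e₀ + y_B e₁, t_B)` as soon as `|y_B| ≤ -t_B`.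

Necessity: the events `(s e₁, √(a² + s²))` lie on the boundary of both cones, and comparing
`e₁`-coordinates with `x_B e₀ + y_B e₁` gives `t_B + |y_B| ≤ √(a² + s²) - |s|` when `s` has the
sign opposite to `y_B`. The right-hand side tends to `0` as `|s| → ∞`.
-/

/-- The (strict) future lightcone of an event in (d+1)D Minkowski spacetime. -/
def futureCone {d : ℕ} (x0 : EuclideanSpace ℝ (Fin d)) (t0 : ℝ) :
    Set (EuclideanSpace ℝ (Fin d) × ℝ) :=
  {p | ‖p.1 - x0‖ ≤ p.2 - t0 ∧ t0 < p.2}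

open EuclideanSpace

section Cones

variable {d : ℕ}

lemma futureCone_subset_futureCone {x₀ x₁ : EuclideanSpace ℝ (Fin d)} {t₀ t₁ : ℝ}
    (h : ‖x₁ - x₀‖ ≤ t₁ - t₀) : futureCone x₁ t₁ ⊆ futureCone x₀ t₀ := by
  rintro p ⟨hp, ht⟩
  have htri := norm_sub_le_norm_sub_add_norm_sub p.1 x₁ x₀
  have := norm_nonneg (x₁ - x₀)
  exact ⟨by linarith, by linarith⟩

lemma inter_futureCone_subset_of_mem_segment {x y z : EuclideanSpace ℝ (Fin d)} {t : ℝ}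
    (hz : z ∈ segment ℝ x y) : futureCone x t ∩ futureCone y t ⊆ futureCone z t := by
  rintro p ⟨⟨hx, ht⟩, hy, -⟩
  have hball := (convex_closedBall p.1 (p.2 - t)).segment_subset
    (by rwa [Metric.mem_closedBall, dist_comm, dist_eq_norm])
    (by rwa [Metric.mem_closedBall, dist_comm, dist_eq_norm]) hz
  rw [Metric.mem_closedBall, dist_comm, dist_eq_norm] at hball
  exact ⟨hball, ht⟩

lemma single_mem_segment_single (i : Fin d) {a b c : ℝ} (h : c ∈ segment ℝ a b) :
    single i c ∈ segment ℝ (single i a) (single i b) := by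
  obtain ⟨θ, η, hθ, hη, hsum, rfl⟩ := h
  refine ⟨θ, η, hθ, hη, hsum, ?_⟩
  ext k
  simp only [smul_eq_mul, PiLp.single_apply, PiLp.add_apply, PiLp.smul_apply, mul_ite, mul_zero]
  split_ifs <;> simp

lemma abs_sub_apply_le_of_mem_futureCone {x₀ : EuclideanSpace ℝ (Fin d)} {t₀ : ℝ}
    {p : EuclideanSpace ℝ (Fin d) × ℝ} (hp : p ∈ futureCone x₀ t₀) (j : Fin d) :
    |p.1 j - x₀ j| ≤ p.2 - t₀ :=
  (PiLp.norm_apply_le (p.1 - x₀) j).trans hp.1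

lemma norm_single_add_single {i j : Fin d} (hij : i ≠ j) (a b : ℝ) :
    ‖single i a + single j b‖ = √(a ^ 2 + b ^ 2) := by
  have horth : inner ℝ (single i a) (single j b) = 0 := by
    simp [inner_single_left, hij]
  rw [← Real.sqrt_mul_self (norm_nonneg _), norm_add_sq_eq_norm_sq_add_norm_sq_real horth]
  simp [sq]

lemma single_mem_futureCone_single {i j : Fin d} (hij : i ≠ j) (a : ℝ) {b : ℝ} (hb : b ≠ 0) :
    (single j b, √(a ^ 2 + b ^ 2)) ∈ futureCone (single i a) 0 := by
  refine ⟨?_, by positivity⟩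
  rw [sub_eq_neg_add, ← PiLp.single_neg, norm_single_add_single hij, neg_sq, sub_zero]

end Cones

lemma exists_abs_eq_and_abs_sub_eq (y : ℝ) {S : ℝ} (hS : 0 ≤ S) :
    ∃ s, |s| = S ∧ |s - y| = S + |y| := by
  rcases le_total 0 y with hy | hy
  · refine ⟨-S, by simp [abs_of_nonneg hS], ?_⟩
    rw [abs_of_nonpos (by linarith), abs_of_nonneg hy]
    ring
  · refine ⟨S, abs_of_nonneg hS, ?_⟩
    rw [abs_of_nonneg (by linarith), abs_of_nonpos hy]
    ring

lemma nonpos_of_forall_le_sqrt_sub {a c : ℝ} (h : ∀ S, 0 < S → c ≤ √(a ^ 2 + S ^ 2) - S) :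
    c ≤ 0 := by
  by_contra! hc
  set S := a ^ 2 / c + 1
  have hS : 0 < S := by positivity
  have hsqrt : √(a ^ 2 + S ^ 2) < S + c := by
    rw [Real.sqrt_lt' (by positivity)]
    have : a ^ 2 = (S - 1) * c := by simp only [S]; field_simp; ring
    nlinarith
  linarith [h S hS]

lemma le_sqrt_sub_of_inter_futureCone_subset {d : ℕ} {i j : Fin d} (hij : i ≠ j) {a x y t : ℝ}
    (h : futureCone (single i (-a)) 0 ∩ futureCone (single i a) 0 ⊆
      futureCone (single i x + single j y) t)
    {S : ℝ} (hS : 0 < S) : t + |y| ≤ √(a ^ 2 + S ^ 2) - S := by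
  obtain ⟨s, hsS, hsy⟩ := exists_abs_eq_and_abs_sub_eq y hS.le
  have hs : s ≠ 0 := abs_pos.mp (hsS ▸ hS)
  have hmem := h ⟨by simpa using single_mem_futureCone_single hij (-a) hs,
    single_mem_futureCone_single hij a hs⟩
  have hj := abs_sub_apply_le_of_mem_futureCone hmem j
  rw [← sq_abs s, hsS] at hj
  simp only [PiLp.single_eq_same, PiLp.add_apply, ne_eq, hij.symm, not_false_eq_true,
    PiLp.single_eq_of_ne, zero_add, hsy] at hj
  linarith

/-- For `x_A = (-a,0,…,0)`, `x_C = (a,0,…,0)` at time `0` and `x_B = (x_B, y_B, 0,…,0)` with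
`-a ≤ x_B ≤ a`, the intersection of the future lightcones of the first two events is contained
in the future lightcone of `(x_B, t_B)` iff `t_B ≤ -|y_B|`. -/
theorem inter_subset_cone_iff_of_between {d : ℕ} (hd : 2 ≤ d) (a xB yB tB : ℝ)
    (hx1 : -a ≤ xB) (hx2 : xB ≤ a) :
    (futureCone (EuclideanSpace.single (⟨0, by omega⟩ : Fin d) (-a)) 0 ∩
       futureCone (EuclideanSpace.single (⟨0, by omega⟩ : Fin d) a) 0 ⊆
     futureCone
       (EuclideanSpace.single (⟨0, by omega⟩ : Fin d) xB +
        EuclideanSpace.single (⟨1, by omega⟩ : Fin d) yB) tB)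
    ↔ tB ≤ -|yB| := by
  set i : Fin d := ⟨0, by omega⟩
  set j : Fin d := ⟨1, by omega⟩
  have hij : i ≠ j := by simp [i, j, Fin.ext_iff]
  constructor
  · intro h
    have := nonpos_of_forall_le_sqrt_sub fun S hS ↦
      le_sqrt_sub_of_inter_futureCone_subset hij h hS
    linarith
  · intro htB
    have hxB : xB ∈ segment ℝ (-a) a := by rw [segment_eq_Icc (by linarith)]; exact ⟨hx1, hx2⟩
    have hB : ‖single i xB - (single i xB + single j yB)‖ ≤ 0 - tB := by
      rw [sub_add_cancel_left, norm_neg, PiLp.norm_single, Real.norm_eq_abs]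
      linarith
    calc _ ⊆ futureCone (single i xB) 0 :=
          inter_futureCone_subset_of_mem_segment (single_mem_segment_single i hxB)
      _ ⊆ _ := futureCone_subset_futureCone hB
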